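/- arXiv:1905.08460 — 2 statements merged into one kernel-verified Lean document; each statement's English description precedes it below -/
import Mathlib

section
/- Let p and q be positive integers. For σ ∈ Sh(p,q), let σ^{-1}·C_{p+q} = {y ∈ ℝ^{p+q} : y_{σ^{-1}(1)} > y_{σ^{-1}(2)} > ⋯ > y_{σ^{-1}(p+q)} > 0}, i.e. the set of points (x_{σ(1)},…,x_{σ(p+q)}) with x_1 > ⋯ > x_{p+q} > 0. Then the sets σ^{-1}·C_{p+q}, for σ ranging over Sh(p,q), are pairwise disjoint, each is contained in C_p × C_q (under the identification ℝ^{p+q} ≅ ℝ^p × ℝ^q), and the complement of their union inside C_p × C_q is a Lebesgue-null set. -/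
open MeasureTheory

/-- The open cone `C_r = {x ∈ ℝ^r : x_1 > x_2 > ⋯ > x_r > 0}`. -/
def cone (r : ℕ) : Set (Fin r → ℝ) :=
  {x | (∀ i j : Fin r, i < j → x j < x i) ∧ ∀ i, 0 < x i}

/-- `Sh(p,q)`: permutations of `{1, …, p+q}` increasing on the first `p`
and on the last `q` indices. -/
def Sh (p q : ℕ) : Finset (Equiv.Perm (Fin (p + q))) :=
  Finset.univ.filter (fun σ =>
    (∀ i j : Fin (p + q), i < j → (j : ℕ) < p → σ i < σ j) ∧
    (∀ i j : Fin (p + q), i < j → p ≤ (i : ℕ) → σ i < σ j))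

/-- `σ⁻¹ ⬝ C_{p+q} = {y ∈ ℝ^{p+q} : y_{σ⁻¹(1)} > ⋯ > y_{σ⁻¹(p+q)} > 0}`. -/
def coneSigma (p q : ℕ) (σ : Equiv.Perm (Fin (p + q))) : Set (Fin (p + q) → ℝ) :=
  {y | (fun k => y (σ⁻¹ k)) ∈ cone (p + q)}

/-- `C_p × C_q`, viewed inside `ℝ^{p+q} ≅ ℝ^p × ℝ^q`. -/
def conePQ (p q : ℕ) : Set (Fin (p + q) → ℝ) :=
  {y | (fun i : Fin p => y (Fin.castAdd q i)) ∈ cone p ∧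
       (fun i : Fin q => y (Fin.natAdd p i)) ∈ cone q}

lemma perm_eq_one_of_strictMono {n : ℕ} (g : Equiv.Perm (Fin n)) (hg : StrictMono ⇑g) :
    g = 1 := by
  have h := (StrictMono.range_inj hg strictMono_id).mp
    (by rw [g.surjective.range_eq, Set.range_id])
  exact Equiv.ext fun i => congrFun h i

lemma hyperplane_null {n : ℕ} {i j : Fin n} (h : i ≠ j) :
    volume {y : Fin n → ℝ | y i = y j} = 0 := by
  have heq : {y : Fin n → ℝ | y i = y j} =
      (LinearMap.ker ((LinearMap.proj i : (Fin n → ℝ) →ₗ[ℝ] ℝ) - LinearMap.proj j) : Set _) := by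
    ext y
    simp [LinearMap.mem_ker, sub_eq_zero]
  rw [heq]
  apply Measure.addHaar_submodule
  intro htop
  have hm : (Pi.single i (1:ℝ)) ∈
      LinearMap.ker ((LinearMap.proj i : (Fin n → ℝ) →ₗ[ℝ] ℝ) - LinearMap.proj j) := by
    rw [htop]; trivial
  simp [LinearMap.mem_ker, Pi.single_eq_same, Pi.single_eq_of_ne (Ne.symm h)] at hm

lemma coneSigma_lt_iff {p q : ℕ} {σ : Equiv.Perm (Fin (p + q))} {y : Fin (p + q) → ℝ}
    (hy : y ∈ coneSigma p q σ) {i j : Fin (p + q)} : y j < y i ↔ σ i < σ j := by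
  have hf : StrictAnti (fun k => y (σ⁻¹ k)) := fun a b h => hy.1 a b h
  have h1 : y i = (fun k => y (σ⁻¹ k)) (σ i) := by simp
  have h2 : y j = (fun k => y (σ⁻¹ k)) (σ j) := by simp
  rw [h1, h2, hf.lt_iff_gt]

theorem shuffle_cone_decomposition (p q : ℕ) (hp : 0 < p) (hq : 0 < q) :
    ((Sh p q : Set (Equiv.Perm (Fin (p + q)))).Pairwise
      (fun σ τ => Disjoint (coneSigma p q σ) (coneSigma p q τ))) ∧
    (∀ σ ∈ Sh p q, coneSigma p q σ ⊆ conePQ p q) ∧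
    volume (conePQ p q \ ⋃ σ ∈ Sh p q, coneSigma p q σ) = 0 := by
  refine ⟨?_, ?_, ?_⟩
  · -- disjointness
    intro σ hσ τ hτ hne
    rw [Set.disjoint_left]
    intro y hyσ hyτ
    apply hne
    have hg : StrictMono ⇑(τ * σ⁻¹) := by
      intro a b hab
      have h1 : y (σ⁻¹ b) < y (σ⁻¹ a) := by
        rw [coneSigma_lt_iff hyσ]
        simpa using hab
      have h2 := (coneSigma_lt_iff hyτ (i := σ⁻¹ a) (j := σ⁻¹ b)).mp h1
      simpa [Equiv.Perm.mul_apply] using h2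
    have := perm_eq_one_of_strictMono _ hg
    rw [mul_inv_eq_one] at this
    exact this.symm
  · -- inclusion
    intro σ hσ y hy
    simp only [Sh, Finset.mem_filter] at hσ
    have hpos : ∀ i, 0 < y i := by
      intro i
      have := hy.2 (σ i)
      simpa using this
    constructor
    · refine ⟨fun a b hab => ?_, fun a => hpos _⟩
      rw [coneSigma_lt_iff hy]
      exact hσ.2.1 (Fin.castAdd q a) (Fin.castAdd q b) hab b.2
    · refine ⟨fun a b hab => ?_, fun a => hpos _⟩
      rw [coneSigma_lt_iff hy]
      exact hσ.2.2 (Fin.natAdd p a) (Fin.natAdd p b) (Nat.add_lt_add_left hab p)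
        (Nat.le_add_right p a)
  · -- null complement
    have hsub : conePQ p q \ (⋃ σ ∈ Sh p q, coneSigma p q σ) ⊆
        ⋃ (i : Fin (p + q)) (j : Fin (p + q)) (_ : i ≠ j), {y | y i = y j} := by
      intro y hy
      by_contra hmem
      simp only [Set.mem_iUnion, Set.mem_setOf_eq, not_exists] at hmem
      have hinj : Function.Injective y := by
        intro i j hij
        by_contra hne
        exact hmem i j hne hij
      have hmono : StrictMono (y ∘ Tuple.sort y) :=
        (Tuple.monotone_sort y).strictMono_of_injective (hinj.comp (Tuple.sort y).injective)
      set σ : Equiv.Perm (Fin (p + q)) := (Fin.revPerm.trans (Tuple.sort y))⁻¹ with hσdef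
      have hσinv : ∀ k, σ⁻¹ k = Tuple.sort y (Fin.rev k) := by
        intro k; simp [hσdef, Equiv.trans_apply]
      have hpos : ∀ i, 0 < y i := by
        intro i
        refine Fin.addCases (motive := fun i => 0 < y i) ?_ ?_ i
        · exact fun a => hy.1.1.2 a
        · exact fun b => hy.1.2.2 b
      have hymem : y ∈ coneSigma p q σ := by
        refine ⟨fun a b hab => ?_, fun k => hpos _⟩
        simp only [hσinv]
        exact hmono (Fin.rev_lt_rev.mpr hab)
      have hSh : σ ∈ Sh p q := by
        simp only [Sh, Finset.mem_filter]
        refine ⟨Finset.mem_univ _, fun i j hij hjp => ?_, fun i j hij hpi => ?_⟩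
        · rw [← coneSigma_lt_iff hymem]
          have hip : (i : ℕ) < p := lt_trans hij hjp
          have := hy.1.1.1 ⟨i, hip⟩ ⟨j, hjp⟩ hij
          have e1 : Fin.castAdd q ⟨(i : ℕ), hip⟩ = i := by ext; simp
          have e2 : Fin.castAdd q ⟨(j : ℕ), hjp⟩ = j := by ext; simp
          simpa only [e1, e2] using this
        · rw [← coneSigma_lt_iff hymem]
          have hpj : p ≤ (j : ℕ) := le_of_lt (lt_of_le_of_lt hpi hij)
          have hiq : (i : ℕ) - p < q := by omega
          have hjq : (j : ℕ) - p < q := by omega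
          have := hy.1.2.1 ⟨(i : ℕ) - p, hiq⟩ ⟨(j : ℕ) - p, hjq⟩
            (show (i:ℕ) - p < (j:ℕ) - p by
              have hij' : (i:ℕ) < (j:ℕ) := hij
              omega)
          have e1 : Fin.natAdd p ⟨(i : ℕ) - p, hiq⟩ = i := by ext; simp; omega
          have e2 : Fin.natAdd p ⟨(j : ℕ) - p, hjq⟩ = j := by ext; simp; omega
          simpa only [e1, e2] using this
      exact hy.2 (Set.mem_biUnion hSh hymem)
    refine measure_mono_null hsub ?_
    refine measure_iUnion_null fun i => measure_iUnion_null fun j => measure_iUnion_null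
      fun h => hyperplane_null h
end

section
/- Let m ≥ 0 be an integer and let f : ℝ^{m+1} → ℝ be a bounded continuous function. Then lim_{n → ∞} (1/n^m) ∑_{x} f(x/n) = ∫_{Δ^m} f dδ_{Δ^m}, where the sum runs over all lattice points x = (x_0,…,x_m) ∈ ℤ_{≥0}^{m+1} with x_0 + ⋯ + x_m = n. Equivalently, the measures (1/n^m) ∑_{x ∈ ℤ_{≥0}^{m+1}, ∑ x_k = n} δ_{x/n} on ℝ^{m+1} converge weakly to δ_{Δ^m} as n → ∞ (both having limiting total mass 1/m!). -/
open MeasureTheory Filter Finset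

namespace LatticeSimplexAux

/-- lattice points in the scaled simplex -/
def Tn (m n : ℕ) : Finset (Fin m → ℕ) :=
  (Fintype.piFinset fun _ => Finset.range (n + 1)).filter fun y => ∑ i, y i ≤ n

lemma mem_Tn {m n : ℕ} {y : Fin m → ℕ} : y ∈ Tn m n ↔ ∑ i, y i ≤ n := by
  simp only [Tn, Finset.mem_filter, Fintype.mem_piFinset, Finset.mem_range]
  refine ⟨fun h => h.2, fun h => ⟨fun i => Nat.lt_succ_of_le (le_trans ?_ h), h⟩⟩
  exact Finset.single_le_sum (fun i _ => Nat.zero_le _) (Finset.mem_univ i)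

/-- the small box with lower corner `y/n` -/
def Bx (m n : ℕ) (y : Fin m → ℕ) : Set (Fin m → ℝ) :=
  Set.univ.pi fun i => Set.Ico ((y i : ℝ) / n) (((y i : ℝ) + 1) / n)

lemma measurableSet_Bx (m n : ℕ) (y : Fin m → ℕ) : MeasurableSet (Bx m n y) :=
  MeasurableSet.univ_pi fun _ => measurableSet_Ico

lemma mem_Bx_iff {m n : ℕ} (hn : 0 < n) {y : Fin m → ℕ} {c : Fin m → ℝ} :
    c ∈ Bx m n y ↔ ∀ i, (y i : ℤ) = ⌊(n : ℝ) * c i⌋ := by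
  have hn' : (0 : ℝ) < n := by exact_mod_cast hn
  simp only [Bx, Set.mem_pi, Set.mem_univ, forall_true_left, Set.mem_Ico]
  refine forall_congr' fun i => ?_
  rw [div_le_iff₀ hn', lt_div_iff₀ hn', eq_comm, Int.floor_eq_iff]
  push_cast
  constructor <;> rintro ⟨h1, h2⟩ <;> constructor <;> nlinarith

lemma volume_Bx {m n : ℕ} (hn : 0 < n) (y : Fin m → ℕ) :
    volume (Bx m n y) = ENNReal.ofReal ((1 / (n : ℝ)) ^ m) := by
  have hn' : (0 : ℝ) < n := by exact_mod_cast hn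
  rw [Bx, volume_pi_pi]
  have h : ∀ i : Fin m, volume (Set.Ico ((y i : ℝ) / n) (((y i : ℝ) + 1) / n))
      = ENNReal.ofReal (1 / (n : ℝ)) := by
    intro i
    rw [Real.volume_Ico]
    congr 1
    field_simp
    ring
  rw [Finset.prod_congr rfl fun i _ => h i, Finset.prod_const, Finset.card_univ,
    Fintype.card_fin, ← ENNReal.ofReal_pow (by positivity)]

/-- the step function -/
noncomputable def hfun (m n : ℕ) (g : (Fin m → ℝ) → ℝ) : (Fin m → ℝ) → ℝ :=
  fun c => ∑ y ∈ Tn m n, (Bx m n y).indicator (fun _ => g fun i => (y i : ℝ) / n) c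

lemma measurable_hfun (m n : ℕ) (g : (Fin m → ℝ) → ℝ) : Measurable (hfun m n g) := by
  refine Finset.measurable_sum _ fun y _ => ?_
  exact measurable_const.indicator (measurableSet_Bx m n y)

lemma integral_hfun {m n : ℕ} (hn : 0 < n) (g : (Fin m → ℝ) → ℝ) :
    ∫ c, hfun m n g c = (1 / (n : ℝ) ^ m) * ∑ y ∈ Tn m n, g (fun i => (y i : ℝ) / n) := by
  have hint : ∀ y : Fin m → ℕ,
      Integrable ((Bx m n y).indicator (fun _ => g fun i => (y i : ℝ) / n)) := by
    intro y
    refine (IntegrableOn.integrable_indicator ?_ (measurableSet_Bx m n y))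
    refine integrableOn_const (ne_of_lt ?_)
    rw [volume_Bx hn y]
    exact ENNReal.ofReal_lt_top
  simp only [hfun]
  rw [integral_finset_sum _ fun y _ => hint y]
  have h : ∀ y ∈ Tn m n,
      ∫ c, (Bx m n y).indicator (fun _ => g fun i => (y i : ℝ) / n) c
        = (1 / (n : ℝ) ^ m) * g (fun i => (y i : ℝ) / n) := by
    intro y _
    rw [integral_indicator_const _ (measurableSet_Bx m n y), measureReal_def, volume_Bx hn y,
      ENNReal.toReal_ofReal (by positivity), smul_eq_mul, one_div, one_div, inv_pow]
  rw [Finset.sum_congr rfl h, ← Finset.mul_sum]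

lemma hfun_eval {m n : ℕ} (hn : 0 < n) (g : (Fin m → ℝ) → ℝ) (c : Fin m → ℝ) :
    hfun m n g c =
      if (∀ i, (0 : ℤ) ≤ ⌊(n : ℝ) * c i⌋) ∧ ∑ i, ⌊(n : ℝ) * c i⌋ ≤ (n : ℤ)
      then g (fun i => (⌊(n : ℝ) * c i⌋ : ℝ) / n) else 0 := by
  split_ifs with hc
  · obtain ⟨h0, hsum⟩ := hc
    set y0 : Fin m → ℕ := fun i => (⌊(n : ℝ) * c i⌋).toNat with hy0def
    have hy0 : ∀ i, (y0 i : ℤ) = ⌊(n : ℝ) * c i⌋ := fun i => Int.toNat_of_nonneg (h0 i)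
    have hy0mem : y0 ∈ Tn m n := by
      rw [mem_Tn]
      have h : ((∑ i, y0 i : ℕ) : ℤ) ≤ (n : ℤ) := by
        push_cast
        rw [Finset.sum_congr rfl fun i _ => hy0 i]
        exact hsum
      exact_mod_cast h
    simp only [hfun]
    rw [Finset.sum_eq_single y0]
    · rw [Set.indicator_of_mem ((mem_Bx_iff hn).2 hy0)]
      congr 1
      funext i
      rw [← hy0 i]
      norm_num
    · intro y hy hne
      refine Set.indicator_of_notMem (fun hmem => hne ?_) _
      have h := (mem_Bx_iff hn).1 hmem
      funext i
      have h2 : (y i : ℤ) = (y0 i : ℤ) := by rw [h i, hy0 i]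
      exact_mod_cast h2
    · intro h; exact absurd hy0mem h
  · simp only [hfun]
    refine Finset.sum_eq_zero fun y hy => Set.indicator_of_notMem (fun hmem => hc ?_) _
    have h := (mem_Bx_iff hn).1 hmem
    constructor
    · intro i; rw [← h i]; exact Int.ofNat_nonneg _
    · have h2 : ∑ i, ⌊(n : ℝ) * c i⌋ = ∑ i, (y i : ℤ) :=
        Finset.sum_congr rfl fun i _ => (h i).symm
      rw [h2]
      exact_mod_cast mem_Tn.1 hy

/-- the simplex in `ℝ^m` -/
def Sset (m : ℕ) : Set (Fin m → ℝ) := {c | (∀ k, 0 ≤ c k) ∧ ∑ k, c k ≤ 1}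

lemma measurableSet_Sset (m : ℕ) : MeasurableSet (Sset m) := by
  have h1 : MeasurableSet {c : Fin m → ℝ | ∀ k, 0 ≤ c k} := by
    have h : {c : Fin m → ℝ | ∀ k, 0 ≤ c k} = ⋂ k, {c | 0 ≤ c k} := by
      ext c; simp [Set.mem_iInter]
    rw [h]
    exact MeasurableSet.iInter fun k => measurableSet_le measurable_const (measurable_pi_apply k)
  have h2 : MeasurableSet {c : Fin m → ℝ | ∑ k, c k ≤ 1} :=
    measurableSet_le (Finset.measurable_sum _ fun i _ => measurable_pi_apply i) measurable_const
  exact h1.inter h2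

lemma volume_hyperplane (m : ℕ) : volume {c : Fin m → ℝ | ∑ i, c i = 1} = 0 := by
  rcases Nat.eq_zero_or_pos m with hm | hm
  · subst hm
    have h : {c : Fin 0 → ℝ | ∑ i, c i = 1} = ∅ := by
      ext c; simp
    rw [h, measure_empty]
  · set L : (Fin m → ℝ) →ₗ[ℝ] ℝ :=
      { toFun := fun c => ∑ i, c i
        map_add' := fun a b => by simp [Finset.sum_add_distrib]
        map_smul' := fun r a => by simp [Finset.mul_sum] } with hL
    have hm' : (0 : ℝ) < m := by exact_mod_cast hm
    set pt : Fin m → ℝ := fun _ => 1 / m with hpt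
    have hptsum : ∑ i : Fin m, pt i = 1 := by
      simp only [hpt, Finset.sum_const, Finset.card_univ, Fintype.card_fin, nsmul_eq_mul]
      field_simp
    have hset : {c : Fin m → ℝ | ∑ i, c i = 1}
        = (fun c => c + (-pt)) ⁻¹' ((LinearMap.ker L : Submodule ℝ (Fin m → ℝ)) : Set (Fin m → ℝ)) := by
      ext c
      simp only [Set.mem_setOf_eq, Set.mem_preimage, SetLike.mem_coe, LinearMap.mem_ker]
      have hLc : L (c + (-pt)) = (∑ i, c i) - 1 := by
        simp only [hL, LinearMap.coe_mk, AddHom.coe_mk, Pi.add_apply, Pi.neg_apply]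
        rw [Finset.sum_add_distrib, Finset.sum_neg_distrib, hptsum]
        ring
      rw [hLc]
      constructor <;> intro h <;> linarith
    have hker : LinearMap.ker L ≠ ⊤ := by
      intro h
      have h1 : (fun _ => (1 : ℝ)) ∈ LinearMap.ker L := by rw [h]; trivial
      rw [LinearMap.mem_ker] at h1
      simp only [hL, LinearMap.coe_mk, AddHom.coe_mk, Finset.sum_const, Finset.card_univ,
        Fintype.card_fin, nsmul_eq_mul, mul_one] at h1
      exact absurd h1 (by exact_mod_cast hm.ne')
    rw [hset, measure_preimage_add_right]
    exact Measure.addHaar_submodule volume _ hker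

lemma abs_hfun_le {m n : ℕ} (hn : 0 < n) (g : (Fin m → ℝ) → ℝ) (C : ℝ)
    (hC : ∀ x, |g x| ≤ C) (c : Fin m → ℝ) :
    |hfun m n g c| ≤ (Set.univ.pi fun _ : Fin m => Set.Icc (0 : ℝ) 2).indicator
      (fun _ => max C 0) c := by
  have hn' : (0 : ℝ) < n := by exact_mod_cast hn
  by_cases hc : c ∈ Set.univ.pi fun _ : Fin m => Set.Icc (0 : ℝ) 2
  · rw [Set.indicator_of_mem hc, hfun_eval hn]
    split_ifs with h
    · exact le_trans (hC _) (le_max_left _ _)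
    · simp
  · rw [Set.indicator_of_notMem hc, hfun_eval hn, if_neg]
    · simp
    · rintro ⟨h0, hsum⟩
      apply hc
      intro i _
      have hfl : (0 : ℝ) ≤ (n : ℝ) * c i := Int.floor_nonneg.1 (h0 i)
      have hci : (0 : ℝ) ≤ c i := by
        by_contra hneg
        push_neg at hneg
        nlinarith
      refine ⟨hci, ?_⟩
      have h1 : (⌊(n : ℝ) * c i⌋ : ℤ) ≤ (n : ℤ) := by
        refine le_trans ?_ hsum
        exact Finset.single_le_sum (fun j _ => h0 j) (Finset.mem_univ i)
      have h2 : (n : ℝ) * c i < (⌊(n : ℝ) * c i⌋ : ℝ) + 1 := Int.lt_floor_add_one _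
      have h3 : ((⌊(n : ℝ) * c i⌋ : ℤ) : ℝ) ≤ (n : ℝ) := by exact_mod_cast h1
      have h4 : (1 : ℝ) ≤ n := by exact_mod_cast hn
      nlinarith

lemma tendsto_hfun (m : ℕ) (g : (Fin m → ℝ) → ℝ) (hg : Continuous g) (C : ℝ)
    (hC : ∀ x, |g x| ≤ C) :
    Tendsto (fun n : ℕ => ∫ c, hfun m n g c) atTop
      (nhds (∫ c in Sset m, g c)) := by
  rw [← Filter.tendsto_add_atTop_iff_nat 1]
  rw [← integral_indicator (measurableSet_Sset m)]
  refine tendsto_integral_of_dominated_convergence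
    ((Set.univ.pi fun _ : Fin m => Set.Icc (0 : ℝ) 2).indicator (fun _ => max C 0))
    (fun n => (measurable_hfun m (n + 1) g).aestronglyMeasurable) ?_ ?_ ?_
  · refine IntegrableOn.integrable_indicator ?_ (MeasurableSet.univ_pi fun _ => measurableSet_Icc)
    refine integrableOn_const (ne_of_lt ?_)
    rw [volume_pi_pi]
    refine ENNReal.prod_lt_top fun i _ => ?_
    rw [Real.volume_Icc]
    exact ENNReal.ofReal_lt_top
  · intro n
    refine Filter.Eventually.of_forall fun c => ?_
    rw [Real.norm_eq_abs]
    exact abs_hfun_le (Nat.succ_pos n) g C hC c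
  · have hnull : volume {c : Fin m → ℝ | ∑ i, c i = 1} = 0 := volume_hyperplane m
    filter_upwards [compl_mem_ae_iff.2 hnull] with c hc
    simp only [Set.mem_compl_iff, Set.mem_setOf_eq] at hc
    by_cases hcS : c ∈ Sset m
    · obtain ⟨hpos, hsum1⟩ := hcS
      rw [Set.indicator_of_mem (show c ∈ Sset m from ⟨hpos, hsum1⟩)]
      have heq : ∀ n : ℕ, hfun m (n + 1) g c
          = g (fun i => (⌊((n + 1 : ℕ) : ℝ) * c i⌋ : ℝ) / ((n + 1 : ℕ) : ℝ)) := by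
        intro n
        rw [hfun_eval (Nat.succ_pos n), if_pos]
        constructor
        · intro i
          exact Int.floor_nonneg.2 (mul_nonneg (by positivity) (hpos i))
        · have hle : (∑ i, (⌊((n + 1 : ℕ) : ℝ) * c i⌋ : ℝ)) ≤ ((n + 1 : ℕ) : ℝ) := by
            calc (∑ i, (⌊((n + 1 : ℕ) : ℝ) * c i⌋ : ℝ))
                ≤ ∑ i, ((n + 1 : ℕ) : ℝ) * c i :=
                  Finset.sum_le_sum fun i _ => Int.floor_le _
              _ = ((n + 1 : ℕ) : ℝ) * ∑ i, c i := by rw [Finset.mul_sum]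
              _ ≤ ((n + 1 : ℕ) : ℝ) * 1 :=
                  mul_le_mul_of_nonneg_left hsum1 (by positivity)
              _ = ((n + 1 : ℕ) : ℝ) := mul_one _
          have h5 : ((∑ i, ⌊((n + 1 : ℕ) : ℝ) * c i⌋ : ℤ) : ℝ) ≤ (((n + 1 : ℕ) : ℤ) : ℝ) := by
            push_cast at hle ⊢
            exact hle
          exact_mod_cast h5
      refine Tendsto.congr (fun n => (heq n).symm) ?_
      refine (hg.tendsto c).comp ?_
      rw [tendsto_pi_nhds]
      intro i
      have hN : ∀ n : ℕ, (0 : ℝ) < ((n + 1 : ℕ) : ℝ) := fun n => by positivity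
      refine tendsto_of_tendsto_of_tendsto_of_le_of_le
        (g := fun n : ℕ => c i - 1 / ((n : ℝ) + 1)) (h := fun _ : ℕ => c i) ?_
        tendsto_const_nhds ?_ ?_
      · have h6 := Tendsto.const_sub (c i) tendsto_one_div_add_atTop_nhds_zero_nat
        simpa using h6
      · intro n
        have h1 : ((n + 1 : ℕ) : ℝ) * c i - 1 < (⌊((n + 1 : ℕ) : ℝ) * c i⌋ : ℝ) :=
          Int.sub_one_lt_floor _
        have h2 : (1 / ((n : ℝ) + 1)) * ((n : ℝ) + 1) = 1 := by
          field_simp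
        rw [le_div_iff₀ (hN n)]
        push_cast at h1 ⊢
        nlinarith [h1, h2]
      · intro n
        have h1 : (⌊((n + 1 : ℕ) : ℝ) * c i⌋ : ℝ) ≤ ((n + 1 : ℕ) : ℝ) * c i :=
          Int.floor_le _
        rw [div_le_iff₀ (hN n)]
        push_cast at h1 ⊢
        nlinarith [h1]
    · rw [Set.indicator_of_notMem hcS]
      simp only [Sset, Set.mem_setOf_eq, not_and_or, not_forall, not_le] at hcS
      rcases hcS with ⟨i, hi⟩ | hgt
      · refine Tendsto.congr (fun n => ?_) (tendsto_const_nhds (x := (0 : ℝ)))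
        have h : hfun m (n + 1) g c = 0 := by
          rw [hfun_eval (Nat.succ_pos n), if_neg]
          rintro ⟨h0, -⟩
          have h1 := Int.floor_nonneg.1 (h0 i)
          have hN : (0 : ℝ) < ((n + 1 : ℕ) : ℝ) := by positivity
          nlinarith
        exact h.symm
      · have hev : ∀ᶠ n : ℕ in atTop, ((n : ℝ) + 1) * (∑ i, c i - 1) ≥ m := by
          have ht : Tendsto (fun n : ℕ => ((n : ℝ) + 1) * (∑ i, c i - 1)) atTop atTop := by
            refine Tendsto.atTop_mul_const (by linarith) ?_
            exact tendsto_atTop_add_const_right _ _ tendsto_natCast_atTop_atTop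
          exact ht.eventually_ge_atTop _
        refine Tendsto.congr' ?_ (tendsto_const_nhds (x := (0 : ℝ)))
        filter_upwards [hev] with n hn
        have h : hfun m (n + 1) g c = 0 := by
          rw [hfun_eval (Nat.succ_pos n), if_neg]
          rintro ⟨-, hsum⟩
          have h1 : ∀ j, ((n + 1 : ℕ) : ℝ) * c j - 1 < (⌊((n + 1 : ℕ) : ℝ) * c j⌋ : ℝ) :=
            fun j => Int.sub_one_lt_floor _
          have hmne : (Finset.univ : Finset (Fin m)).Nonempty := by
            rcases Nat.eq_zero_or_pos m with hm | hm
            · exfalso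
              subst hm
              simp only [Finset.univ_eq_empty, Finset.sum_empty] at hgt
              linarith
            · exact Finset.univ_nonempty_iff.2 ⟨⟨0, hm⟩⟩
          have h2 : ((n + 1 : ℕ) : ℝ) * (∑ j, c j) - m
              < ∑ j, (⌊((n + 1 : ℕ) : ℝ) * c j⌋ : ℝ) := by
            calc ((n + 1 : ℕ) : ℝ) * (∑ j, c j) - m
                = ∑ j : Fin m, (((n + 1 : ℕ) : ℝ) * c j - 1) := by
                  rw [Finset.sum_sub_distrib, ← Finset.mul_sum]
                  simp [Finset.card_univ]
              _ < _ := Finset.sum_lt_sum_of_nonempty hmne fun j _ => h1 j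
          have h3 : ((∑ j, ⌊((n + 1 : ℕ) : ℝ) * c j⌋ : ℤ) : ℝ) ≤ (((n + 1 : ℕ) : ℤ) : ℝ) := by
            exact_mod_cast hsum
          push_cast at h2 h3 hn
          nlinarith
        exact h.symm

end LatticeSimplexAux

/-- Lebesgue measure `δ_{Δ^m}` on the standard `m`-simplex
`Δ^m = {c ∈ ℝ_{≥0}^{m+1} : c_0 + ⋯ + c_m = 1}`, realized as the pushforward of
`m`-dimensional Lebesgue measure on `{c ∈ ℝ_{≥0}^m : ∑ c_k ≤ 1}` under
`(c_1, …, c_m) ↦ (1 − ∑ c_k, c_1, …, c_m)`. -/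
noncomputable def simplexMeasure (m : ℕ) : Measure (Fin (m + 1) → ℝ) :=
  Measure.map (fun c : Fin m → ℝ => Fin.cons (1 - ∑ k, c k) c)
    (volume.restrict {c : Fin m → ℝ | (∀ k, 0 ≤ c k) ∧ ∑ k, c k ≤ 1})

open LatticeSimplexAux in
theorem lattice_point_sums_tendsto_simplex_integral
    (m : ℕ) (f : (Fin (m + 1) → ℝ) → ℝ)
    (hf_cont : Continuous f) (hf_bdd : ∃ C, ∀ x, |f x| ≤ C) :
    Tendsto
      (fun n : ℕ => (1 / (n : ℝ) ^ m) *
        ∑ x ∈ Finset.Nat.antidiagonalTuple (m + 1) n,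
          f (fun k => (x k : ℝ) / (n : ℝ)))
      atTop (nhds (∫ y, f y ∂(simplexMeasure m))) := by
  obtain ⟨C, hC⟩ := hf_bdd
  have hφ : Continuous
      (fun c : Fin m → ℝ => (Fin.cons (1 - ∑ k, c k) c : Fin (m + 1) → ℝ)) := by
    refine continuous_pi fun k => ?_
    refine Fin.cases ?_ ?_ k
    · simp only [Fin.cons_zero]
      exact continuous_const.sub (continuous_finset_sum _ fun i _ => continuous_apply i)
    · intro j
      simp only [Fin.cons_succ]
      exact continuous_apply j
  set g : (Fin m → ℝ) → ℝ := fun c => f (Fin.cons (1 - ∑ k, c k) c) with hg_def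
  have hg : Continuous g := hf_cont.comp hφ
  have hgC : ∀ x, |g x| ≤ C := fun x => hC _
  have hint : ∫ y, f y ∂(simplexMeasure m) = ∫ c in Sset m, g c := by
    rw [simplexMeasure, integral_map hφ.aemeasurable hf_cont.aestronglyMeasurable]
    rfl
  have hsum : ∀ n : ℕ, 0 < n →
      ∑ x ∈ Finset.Nat.antidiagonalTuple (m + 1) n, f (fun k => (x k : ℝ) / (n : ℝ))
        = ∑ y ∈ Tn m n, g (fun i => (y i : ℝ) / n) := by
    intro n hn
    have hn' : (0 : ℝ) < n := by exact_mod_cast hn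
    refine Finset.sum_nbij' (fun x => fun i : Fin m => x i.succ)
      (fun y => Fin.cons (n - ∑ i, y i) y) ?_ ?_ ?_ ?_ ?_
    · intro x hx
      rw [Finset.Nat.mem_antidiagonalTuple, Fin.sum_univ_succ] at hx
      rw [mem_Tn]
      show ∑ i : Fin m, x i.succ ≤ n
      omega
    · intro y hy
      rw [mem_Tn] at hy
      rw [Finset.Nat.mem_antidiagonalTuple, Fin.sum_univ_succ]
      simp only [Fin.cons_zero, Fin.cons_succ]
      omega
    · intro x hx
      rw [Finset.Nat.mem_antidiagonalTuple, Fin.sum_univ_succ] at hx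
      funext k
      refine Fin.cases ?_ ?_ k
      · show n - ∑ i : Fin m, x i.succ = x 0
        omega
      · intro j
        simp only [Fin.cons_succ]
    · intro y hy
      funext i
      simp only [Fin.cons_succ]
    · intro x hx
      rw [Finset.Nat.mem_antidiagonalTuple, Fin.sum_univ_succ] at hx
      rw [hg_def]
      congr 1
      funext k
      refine Fin.cases ?_ ?_ k
      · show ((x 0 : ℝ)) / n = 1 - ∑ i : Fin m, ((x i.succ : ℝ)) / n
        have hx0 : ((x 0 : ℝ)) + ∑ i : Fin m, ((x i.succ : ℝ)) = (n : ℝ) := by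
          exact_mod_cast hx
        rw [eq_sub_iff_add_eq, ← Finset.sum_div, ← add_div, div_eq_one_iff_eq hn'.ne']
        linarith
      · intro j
        simp only [Fin.cons_succ]
  rw [hint]
  refine Tendsto.congr' ?_ (tendsto_hfun m g hg C hgC)
  filter_upwards [eventually_gt_atTop 0] with n hn
  rw [integral_hfun hn, hsum n hn]
end
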